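/- Let H ≥ 1 and let M be an H×H block matrix with blocks M_{km} ∈ ℝ^{n_u×n_u} (1 ≤ k,m ≤ H) and J an H×1 block matrix with blocks J_k ∈ ℝ^{n_u×n_x}, such that: (1) every M_{km} is (c_M,γ_M)-SED and every J_k is (c_J,γ_M)-SED, with c_M, c_J ≥ 1; and (2) λ_min·I ⪯ M ⪯ λ_max·I with 0 < λ_min ≤ λ_max and λ_max ≥ 1. Then L := −M⁻¹J, with blocks L_k ∈ ℝ^{n_u×n_x}, satisfies that every L_k is (c_L, γ_L)-SED, where c_L = ‖J‖/λ_min + 2c_J and γ_L = λ_min·γ_M/(λ_max·ln(c_M·N·H + 1) + λ_min). -/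

import Mathlib

open scoped Matrix.Norms.L2Operator
open Matrix

noncomputable section

/-- Index type of a vector partitioned into `N` agent blocks of sizes `d`. -/
abbrev BIdx {N : ℕ} (d : Fin N → ℕ) : Type := (i : Fin N) × Fin (d i)

/-- The `(i,j)` agent block of a block-partitioned matrix. -/
def blk {N : ℕ} {d e : Fin N → ℕ} (X : Matrix (BIdx d) (BIdx e) ℝ) (i j : Fin N) :
    Matrix (Fin (d i)) (Fin (e j)) ℝ :=
  Matrix.of fun a b => X ⟨i, a⟩ ⟨j, b⟩

/-- `X` is `(c, γ)`-spatially exponentially decaying w.r.t. `dist`: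
`‖[X]_{ij}‖ ≤ c e^{-γ dist(i,j)}` for all agents `i, j`. -/
def IsSED {N : ℕ} {d e : Fin N → ℕ} (dist : Fin N → Fin N → ℝ) (c γ : ℝ)
    (X : Matrix (BIdx d) (BIdx e) ℝ) : Prop :=
  ∀ i j : Fin N, ‖blk X i j‖ ≤ c * Real.exp (-γ * dist i j)

/-- `dist` is nonnegative, symmetric, and satisfies the triangle inequality. -/
structure IsDist {N : ℕ} (dist : Fin N → Fin N → ℝ) : Prop where
  nonneg : ∀ i j, 0 ≤ dist i j
  symm : ∀ i j, dist i j = dist j i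
  triangle : ∀ i j k, dist i j ≤ dist i k + dist k j

/-- `A` is `(τ, e^{-ρ})`-stable: `‖A^k‖ ≤ τ e^{-ρ k}` for every `k ≥ 0`. -/
def IsExpStable {n : Type*} [Fintype n] [DecidableEq n] (τ ρ : ℝ)
    (A : Matrix n n ℝ) : Prop :=
  ∀ k : ℕ, ‖A ^ k‖ ≤ τ * Real.exp (-ρ * (k : ℝ))

/-- Smallest eigenvalue of a symmetric matrix, characterized via the Loewner order. -/
def eigMin {n : Type*} [Fintype n] [DecidableEq n] (A : Matrix n n ℝ) : ℝ :=
  sSup {t : ℝ | (A - t • (1 : Matrix n n ℝ)).PosSemidef}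

/-- Largest eigenvalue of a symmetric matrix, characterized via the Loewner order. -/
def eigMax {n : Type*} [Fintype n] [DecidableEq n] (A : Matrix n n ℝ) : ℝ :=
  sInf {t : ℝ | (t • (1 : Matrix n n ℝ) - A).PosSemidef}

/-- `G = ∑_{t=0}^∞ (A^t)ᵀ Q A^t`. -/
def Gmat {ιx : Type*} [Fintype ιx] [DecidableEq ιx] (A Q : Matrix ιx ιx ℝ) :
    Matrix ιx ιx ℝ :=
  ∑' t : ℕ, (A ^ t)ᵀ * Q * (A ^ t)

section LQRDefs

variable {ιx ιu : Type*} [Fintype ιx] [DecidableEq ιx] [Fintype ιu] [DecidableEq ιu]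

/-- The `(k,m)` block of `M^{(H)}` (blocks indexed by `1 ≤ k, m ≤ H`). -/
def Mblk (A : Matrix ιx ιx ℝ) (B : Matrix ιx ιu ℝ) (Q : Matrix ιx ιx ℝ)
    (R : Matrix ιu ιu ℝ) (S : Matrix ιu ιx ℝ) (k m : ℕ) : Matrix ιu ιu ℝ :=
  if k = m then Bᵀ * Gmat A Q * B + R
  else if m < k then Bᵀ * Gmat A Q * A ^ (k - m) * B + S * A ^ (k - m - 1) * B
  else Bᵀ * (A ^ (m - k))ᵀ * Gmat A Q * B + Bᵀ * (A ^ (m - k - 1))ᵀ * Sᵀ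

/-- The `k`-th block of `J^{(H)}` (blocks indexed by `1 ≤ k ≤ H`). -/
def Jblk (A : Matrix ιx ιx ℝ) (B : Matrix ιx ιu ℝ) (Q : Matrix ιx ιx ℝ)
    (S : Matrix ιu ιx ℝ) (k : ℕ) : Matrix ιu ιx ℝ :=
  Bᵀ * Gmat A Q * A ^ k + S * A ^ (k - 1)

/-- The `H × H` block matrix `M^{(H)}`. -/
def MH (H : ℕ) (A : Matrix ιx ιx ℝ) (B : Matrix ιx ιu ℝ) (Q : Matrix ιx ιx ℝ)
    (R : Matrix ιu ιu ℝ) (S : Matrix ιu ιx ℝ) :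
    Matrix (Fin H × ιu) (Fin H × ιu) ℝ :=
  Matrix.of fun p q => Mblk A B Q R S ((p.1 : ℕ) + 1) ((q.1 : ℕ) + 1) p.2 q.2

/-- The `H × 1` block matrix `J^{(H)}`. -/
def JH (H : ℕ) (A : Matrix ιx ιx ℝ) (B : Matrix ιx ιu ℝ) (Q : Matrix ιx ιx ℝ)
    (S : Matrix ιu ιx ℝ) : Matrix (Fin H × ιu) ιx ℝ :=
  Matrix.of fun p b => Jblk A B Q S ((p.1 : ℕ) + 1) p.2 b

/-- `L^{(H)} = -(M^{(H)})⁻¹ J^{(H)}`. -/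
def LH (H : ℕ) (A : Matrix ιx ιx ℝ) (B : Matrix ιx ιu ℝ) (Q : Matrix ιx ιx ℝ)
    (R : Matrix ιu ιu ℝ) (S : Matrix ιu ιx ℝ) : Matrix (Fin H × ιu) ιx ℝ :=
  -(MH H A B Q R S)⁻¹ * JH H A B Q S

/-- The `k`-th block `L_k^{(H)}` of `L^{(H)}` (0-based index `k : Fin H` is block `k+1`). -/
def LHblk (H : ℕ) (A : Matrix ιx ιx ℝ) (B : Matrix ιx ιu ℝ) (Q : Matrix ιx ιx ℝ)
    (R : Matrix ιu ιu ℝ) (S : Matrix ιu ιx ℝ) (k : Fin H) : Matrix ιu ιx ℝ :=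
  Matrix.of fun a b => LH H A B Q R S (k, a) b

/-- `P` solves the discrete algebraic Riccati equation. -/
def IsDARE (A : Matrix ιx ιx ℝ) (B : Matrix ιx ιu ℝ) (Q : Matrix ιx ιx ℝ)
    (R : Matrix ιu ιu ℝ) (S : Matrix ιu ιx ℝ) (P : Matrix ιx ιx ℝ) : Prop :=
  P = Aᵀ * P * A - (Aᵀ * P * B + Sᵀ) * (R + Bᵀ * P * B)⁻¹ * (Bᵀ * P * A + S) + Q

/-- The optimal LQR state-feedback gain `K = (R + BᵀPB)⁻¹(BᵀPA + S)`. -/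
def optGain (A : Matrix ιx ιx ℝ) (B : Matrix ιx ιu ℝ)
    (R : Matrix ιu ιu ℝ) (S : Matrix ιu ιx ℝ) (P : Matrix ιx ιx ℝ) : Matrix ιu ιx ℝ :=
  (R + Bᵀ * P * B)⁻¹ * (Bᵀ * P * A + S)

end LQRDefs

/-- The constant `c_M`. -/
def cMconst (N : ℕ) (τ ρ b q r s nQ nS : ℝ) : ℝ :=
  b ^ 2 * (N : ℝ) ^ 2 * (τ ^ 2 * nQ / (1 - Real.exp (-(2 * ρ))) + 2 * q)
    + b * (N : ℝ) * (s + τ * nS) + r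

/-- The constant `c_J`. -/
def cJconst (N : ℕ) (τ ρ b q s nQ nS : ℝ) : ℝ :=
  b * (N : ℝ) * (τ ^ 2 * nQ / (1 - Real.exp (-(2 * ρ))) + 2 * q) + s + τ * nS

/-- The constant `c_K` of the open-loop-stable spatial-decay theorem. -/
def cKconst (N : ℕ) (τ ρ b q s nB nQ nS nK lmin : ℝ) : ℝ :=
  2 * τ ^ 3 * (nB ^ 2 * nK * nQ + nB * nK * nS)
      / ((1 - Real.exp (-(2 * ρ))) ^ ((5 : ℝ) / 2) * lmin)
    + 2 * τ ^ 2 * (nB * nQ + nS) / ((1 - Real.exp (-(2 * ρ))) ^ 2 * lmin)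
    + 2 * cJconst N τ ρ b q s nQ nS

/-- The constant `γ_K` of the open-loop-stable spatial-decay theorem. -/
def gammaKconst (N : ℕ) (γ τ ρ a b q r s nB nQ nS lmin lmaxR : ℝ) : ℝ :=
  (γ * ρ * lmin / (ρ + Real.log (a * (N : ℝ)))) *
    (1 / ((lmaxR + 4 * τ ^ 2 * (nB ^ 2 * nQ + nB * nS)
          / (1 - Real.exp (-(2 * ρ))) ^ 2) *
        Real.log (γ * cMconst N τ ρ b q r s nQ nS * (N : ℝ) ^ 2
          + cMconst N τ ρ b q r s nQ nS * (N : ℝ) + 1) + lmin))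


/-! With `A = 1 - λ_max⁻¹ M` the Loewner bounds give `0 ⪯ A ⪯ (1 - λ_min/λ_max) I`, hence
`‖A‖ ≤ 1 - λ_min/λ_max`, and for every `T` the truncated Neumann series reads
`M⁻¹ = λ_max⁻¹ ∑_{t<T} A^t + A^T M⁻¹`. Multiplying by `M` sums `N H` block products, and the
triangle inequality for `dist` keeps the decay rate, so each `A^t J` is SED with rate `γ_M` and
constant `c_J (c_M N H + 1)^t`; the remainder `A^T M⁻¹ J` has norm at most
`(1 - λ_min/λ_max)^T ‖J‖/λ_min`. For agents `i, j` one takes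
`T = ⌈γ_M dist(i,j) / (log(c_M N H + 1) + λ_min/λ_max)⌉`, which balances the growth of the first
part against the decay of the second. -/

theorem eq_smul_geom_sum_add_pow_mul {𝕜 R : Type*} [CommRing 𝕜] [Ring R] [Algebra 𝕜 R]
    {M M' : R} (h : M * M' = 1) (c : 𝕜) (T : ℕ) :
    M' = c • ∑ t ∈ Finset.range T, (1 - c • M) ^ t + (1 - c • M) ^ T * M' :=
  calc M' = (1 - (1 - c • M) ^ T) * M' + (1 - c • M) ^ T * M' := by noncomm_ring
    _ = (∑ t ∈ Finset.range T, (1 - c • M) ^ t) * (1 - (1 - c • M)) * M'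
        + (1 - c • M) ^ T * M' := by rw [geom_sum_mul_neg]
    _ = c • ∑ t ∈ Finset.range T, (1 - c • M) ^ t + (1 - c • M) ^ T * M' := by
        rw [sub_sub_cancel, mul_assoc, smul_mul_assoc, h, mul_smul_comm, mul_one]

namespace Matrix

variable {𝕜 : Type*} [RCLike 𝕜] {m n m' n' : Type*}
  [Fintype m] [Fintype n] [Fintype m'] [Fintype n']
  [DecidableEq m] [DecidableEq n] [DecidableEq m'] [DecidableEq n']

theorem l2_opNorm_one_le : ‖(1 : Matrix n n 𝕜)‖ ≤ 1 := by
  rw [cstar_norm_def, map_one]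
  exact ContinuousLinearMap.norm_id_le

theorem l2_opNorm_pow_le (A : Matrix n n 𝕜) (t : ℕ) : ‖A ^ t‖ ≤ ‖A‖ ^ t := by
  induction t with
  | zero => simpa using l2_opNorm_one_le
  | succ t ih =>
    rw [pow_succ, pow_succ]
    exact (norm_mul_le _ _).trans (mul_le_mul_of_nonneg_right ih (norm_nonneg _))

theorem l2_opNorm_one_submatrix_le {f : m' → m} (hf : Function.Injective f) :
    ‖(1 : Matrix m m 𝕜).submatrix id f‖ ≤ 1 := by
  set P := (1 : Matrix m m 𝕜).submatrix id f
  have hP : Pᴴ * P = 1 := by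
    rw [conjTranspose_submatrix, conjTranspose_one]
    simpa [P, submatrix_one f hf] using one_submatrix_mul f (Equiv.refl m) P
  have := l2_opNorm_conjTranspose_mul_self P
  rw [hP] at this
  nlinarith [norm_nonneg P, l2_opNorm_one_le (n := m') (𝕜 := 𝕜)]

theorem l2_opNorm_submatrix_le (X : Matrix m n 𝕜) {f : m' → m} {g : n' → n}
    (hf : Function.Injective f) (hg : Function.Injective g) : ‖X.submatrix f g‖ ≤ ‖X‖ := by
  have hX : X.submatrix f g
      = ((1 : Matrix m m 𝕜).submatrix id f)ᴴ * X * (1 : Matrix n n 𝕜).submatrix id g := by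
    ext a b
    simp [mul_apply, one_apply]
  calc ‖X.submatrix f g‖
      ≤ ‖((1 : Matrix m m 𝕜).submatrix id f)ᴴ‖ * ‖X‖ * ‖(1 : Matrix n n 𝕜).submatrix id g‖ := by
        rw [hX]
        exact (l2_opNorm_mul _ _).trans
          (mul_le_mul_of_nonneg_right (l2_opNorm_mul _ _) (norm_nonneg _))
    _ ≤ 1 * ‖X‖ * 1 := by
        rw [l2_opNorm_conjTranspose]
        gcongr
        · exact l2_opNorm_one_submatrix_le hf
        · exact l2_opNorm_one_submatrix_le hg
    _ = ‖X‖ := by ring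

open scoped RealInnerProductSpace in
theorem l2_opNorm_le_of_posSemidef {A : Matrix n n ℝ} {η : ℝ} (hη : 0 ≤ η) (hA : A.PosSemidef)
    (hηA : (η • 1 - A).PosSemidef) : ‖A‖ ≤ η := by
  have hsymm : (toEuclideanCLM (𝕜 := ℝ) (n := n) A).IsSymmetric := by
    rw [coe_toEuclideanCLM_eq_toEuclideanLin]
    exact isSymmetric_toEuclideanLin_iff.mpr hA.isHermitian
  rw [cstar_norm_def]
  refine (ContinuousLinearMap.norm_eq_iSup_rayleighQuotient _ hsymm).trans_le (ciSup_le fun x => ?_)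
  have h0 := hA.dotProduct_mulVec_nonneg x.ofLp
  have h1 := hηA.dotProduct_mulVec_nonneg x.ofLp
  simp only [star_trivial, sub_mulVec, smul_mulVec, one_mulVec, dotProduct_sub,
    dotProduct_smul, smul_eq_mul, sub_nonneg] at h0 h1
  have hx : ‖x‖ ^ 2 = x.ofLp ⬝ᵥ x.ofLp := by
    rw [← real_inner_self_eq_norm_sq, EuclideanSpace.inner_eq_star_dotProduct]
    simp
  have hinner : ⟪toEuclideanCLM (𝕜 := ℝ) (n := n) A x, x⟫ = x.ofLp ⬝ᵥ A *ᵥ x.ofLp := by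
    rw [real_inner_comm, inner_toEuclideanCLM]
  rw [ContinuousLinearMap.rayleighQuotient, ContinuousLinearMap.reApplyInnerSelf_apply,
    RCLike.re_to_real, hinner, hx, abs_div, abs_of_nonneg h0,
    abs_of_nonneg (by rw [← hx]; positivity)]
  exact div_le_of_le_mul₀ (by rw [← hx]; positivity) hη h1

theorem posDef_of_sub_smul_one_posSemidef {ι : Type*} [DecidableEq ι] {M : Matrix ι ι ℝ}
    {lmin : ℝ} (hlow : (M - lmin • 1).PosSemidef) (hlmin : 0 < lmin) : M.PosDef := by
  simpa using PosDef.posSemidef_add hlow (PosDef.one.smul hlmin)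

section LoewnerBounds

variable {M : Matrix n n ℝ} {lmin lmax : ℝ}

theorem norm_one_sub_inv_smul_le (hlow : (M - lmin • 1).PosSemidef)
    (hup : (lmax • 1 - M).PosSemidef) (hlmax : 0 < lmax) (hle : lmin ≤ lmax) :
    ‖1 - lmax⁻¹ • M‖ ≤ 1 - lmin / lmax := by
  refine l2_opNorm_le_of_posSemidef (sub_nonneg.2 ((div_le_one hlmax).2 hle)) ?_ ?_
  · convert hup.smul (inv_nonneg.2 hlmax.le) using 1
    rw [smul_sub, smul_smul, inv_mul_cancel₀ hlmax.ne', one_smul]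
  · convert hlow.smul (inv_nonneg.2 hlmax.le) using 1
    rw [smul_sub, smul_smul, sub_smul, one_smul, div_eq_inv_mul]
    abel

theorem l2_opNorm_inv_le (hlow : (M - lmin • 1).PosSemidef) (hup : (lmax • 1 - M).PosSemidef)
    (hlmin : 0 < lmin) (hle : lmin ≤ lmax) : ‖M⁻¹‖ ≤ lmin⁻¹ := by
  have hlmax : 0 < lmax := hlmin.trans_le hle
  have hinv : M * M⁻¹ = 1 :=
    mul_nonsing_inv M (posDef_of_sub_smul_one_posSemidef hlow hlmin).det_pos.ne'.isUnit
  -- the truncated Neumann series with a single term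
  have hrec := eq_smul_geom_sum_add_pow_mul hinv lmax⁻¹ 1
  rw [Finset.sum_range_one, pow_zero, pow_one] at hrec
  have hbound : ‖M⁻¹‖ ≤ lmax⁻¹ + (1 - lmin / lmax) * ‖M⁻¹‖ :=
    calc ‖M⁻¹‖ ≤ ‖lmax⁻¹ • (1 : Matrix n n ℝ)‖ + ‖(1 - lmax⁻¹ • M) * M⁻¹‖ := by
          conv_lhs => rw [hrec]
          exact norm_add_le _ _
      _ ≤ lmax⁻¹ * 1 + (1 - lmin / lmax) * ‖M⁻¹‖ := by
          rw [norm_smul, Real.norm_of_nonneg (inv_nonneg.2 hlmax.le)]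
          gcongr
          · exact l2_opNorm_one_le
          · exact (norm_mul_le _ _).trans (mul_le_mul_of_nonneg_right
              (norm_one_sub_inv_smul_le hlow hup hlmax hle) (norm_nonneg _))
      _ = lmax⁻¹ + (1 - lmin / lmax) * ‖M⁻¹‖ := by rw [mul_one]
  have hscaled : lmin / lmax * ‖M⁻¹‖ ≤ lmax⁻¹ := by linarith
  calc ‖M⁻¹‖ = lmax / lmin * (lmin / lmax * ‖M⁻¹‖) := by field_simp
    _ ≤ lmax / lmin * lmax⁻¹ := by gcongr
    _ = lmin⁻¹ := by field_simp

end LoewnerBounds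

end Matrix

section BlockSED

variable {N H : ℕ} {d e f : Fin N → ℕ}

def blockEmb (k : Fin H) (i : Fin N) : Fin (d i) → Fin H × BIdx d := fun a => (k, ⟨i, a⟩)

theorem blockEmb_injective (k : Fin H) (i : Fin N) : Function.Injective (blockEmb (d := d) k i) :=
  fun a b hab => by simpa [blockEmb] using hab

def colBlk (k : Fin H) (i j : Fin N) :
    Matrix (Fin H × BIdx d) (BIdx e) ℝ →ₗ[ℝ] Matrix (Fin (d i)) (Fin (e j)) ℝ where
  toFun X := X.submatrix (blockEmb k i) (⟨j, ·⟩)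
  map_add' _ _ := rfl
  map_smul' _ _ := rfl

theorem colBlk_apply (k : Fin H) (i j : Fin N) (X : Matrix (Fin H × BIdx d) (BIdx e) ℝ) :
    colBlk k i j X = X.submatrix (blockEmb k i) (⟨j, ·⟩) :=
  rfl

theorem colBlk_mul (M : Matrix (Fin H × BIdx d) (Fin H × BIdx e) ℝ)
    (X : Matrix (Fin H × BIdx e) (BIdx f) ℝ) (k : Fin H) (i j : Fin N) :
    colBlk k i j (M * X)
      = ∑ m, ∑ l, M.submatrix (blockEmb k i) (blockEmb m l) * colBlk m l j X := by
  ext a b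
  simp [colBlk_apply, blockEmb, mul_apply, Matrix.sum_apply, Fintype.sum_prod_type,
    Fintype.sum_sigma]

theorem norm_colBlk_le (k : Fin H) (i j : Fin N) (X : Matrix (Fin H × BIdx d) (BIdx e) ℝ) :
    ‖colBlk k i j X‖ ≤ ‖X‖ :=
  l2_opNorm_submatrix_le X (blockEmb_injective k i) (sigma_mk_injective (β := fun j => Fin (e j)))

variable (dist : Fin N → Fin N → ℝ) (c γ : ℝ)

/- In the paper's notation: every block `M_{km}`, resp. every block `J_k`, is `(c, γ)`-SED.
Both definitions unfold to the statements phrased with `IsSED`. -/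
def IsBlockSED (M : Matrix (Fin H × BIdx d) (Fin H × BIdx e) ℝ) : Prop :=
  ∀ k m i l, ‖M.submatrix (blockEmb k i) (blockEmb m l)‖ ≤ c * Real.exp (-γ * dist i l)

def IsBlockColSED (X : Matrix (Fin H × BIdx d) (BIdx e) ℝ) : Prop :=
  ∀ k i j, ‖colBlk k i j X‖ ≤ c * Real.exp (-γ * dist i j)

variable {dist c γ}

theorem IsBlockColSED.mono {X : Matrix (Fin H × BIdx d) (BIdx e) ℝ} {c' : ℝ}
    (hX : IsBlockColSED dist c γ X) (hc : c ≤ c') : IsBlockColSED dist c' γ X :=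
  fun k i j => (hX k i j).trans (mul_le_mul_of_nonneg_right hc (Real.exp_pos _).le)

theorem IsBlockColSED.sub_smul {X Y : Matrix (Fin H × BIdx d) (BIdx e) ℝ} {c' : ℝ}
    (hX : IsBlockColSED dist c γ X) (hY : IsBlockColSED dist c' γ Y) (s : ℝ) :
    IsBlockColSED dist (c + |s| * c') γ (X - s • Y) := fun k i j =>
  calc ‖colBlk k i j (X - s • Y)‖ ≤ ‖colBlk k i j X‖ + |s| * ‖colBlk k i j Y‖ := by
        rw [map_sub, map_smul, ← Real.norm_eq_abs, ← norm_smul]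
        exact norm_sub_le _ _
    _ ≤ c * Real.exp (-γ * dist i j) + |s| * (c' * Real.exp (-γ * dist i j)) := by
        gcongr
        exacts [hX k i j, hY k i j]
    _ = (c + |s| * c') * Real.exp (-γ * dist i j) := by ring

theorem IsBlockColSED.sum {ι : Type*} {s : Finset ι} {c : ι → ℝ}
    {X : ι → Matrix (Fin H × BIdx d) (BIdx e) ℝ} (hX : ∀ t ∈ s, IsBlockColSED dist (c t) γ (X t)) :
    IsBlockColSED dist (∑ t ∈ s, c t) γ (∑ t ∈ s, X t) := fun k i j => by
  rw [map_sum, Finset.sum_mul]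
  exact (norm_sum_le _ _).trans (Finset.sum_le_sum fun t ht => hX t ht k i j)

theorem IsBlockSED.mul {M : Matrix (Fin H × BIdx d) (Fin H × BIdx e) ℝ}
    {X : Matrix (Fin H × BIdx e) (BIdx f) ℝ} {c' : ℝ}
    (hM : IsBlockSED dist c γ M) (hX : IsBlockColSED dist c' γ X) (hdist : IsDist dist)
    (hγ : 0 ≤ γ) (hc : 0 ≤ c) (hc' : 0 ≤ c') :
    IsBlockColSED dist (H * N * (c * c')) γ (M * X) := fun k i j => by
  have hterm (m : Fin H) (l : Fin N) :
      ‖M.submatrix (blockEmb k i) (blockEmb m l) * colBlk m l j X‖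
        ≤ c * c' * Real.exp (-γ * dist i j) :=
    calc _ ≤ ‖M.submatrix (blockEmb k i) (blockEmb m l)‖ * ‖colBlk m l j X‖ := l2_opNorm_mul _ _
      _ ≤ (c * Real.exp (-γ * dist i l)) * (c' * Real.exp (-γ * dist l j)) :=
          mul_le_mul (hM k m i l) (hX m l j) (norm_nonneg _) (by positivity)
      _ = c * c' * Real.exp (-γ * (dist i l + dist l j)) := by
          rw [mul_add, Real.exp_add]
          ring
      _ ≤ c * c' * Real.exp (-γ * dist i j) := by
          gcongr c * c' * Real.exp ?_
          exact mul_le_mul_of_nonpos_left (hdist.triangle i j l) (neg_nonpos.2 hγ)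
  rw [colBlk_mul]
  calc ‖∑ m, ∑ l, M.submatrix (blockEmb k i) (blockEmb m l) * colBlk m l j X‖
      ≤ ∑ m, ∑ l, ‖M.submatrix (blockEmb k i) (blockEmb m l) * colBlk m l j X‖ :=
        (norm_sum_le _ _).trans (Finset.sum_le_sum fun m _ => norm_sum_le _ _)
    _ ≤ ∑ _m : Fin H, ∑ _l : Fin N, c * c' * Real.exp (-γ * dist i j) := by
        gcongr with m _ l _
        exact hterm m l
    _ = H * N * (c * c') * Real.exp (-γ * dist i j) := by
        simp only [Finset.sum_const, Finset.card_univ, Fintype.card_fin, nsmul_eq_mul]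
        ring

theorem IsBlockSED.pow_mul {M : Matrix (Fin H × BIdx d) (Fin H × BIdx d) ℝ}
    {J : Matrix (Fin H × BIdx d) (BIdx e) ℝ} {c' lmax : ℝ}
    (hM : IsBlockSED dist c γ M) (hJ : IsBlockColSED dist c' γ J) (hdist : IsDist dist)
    (hγ : 0 ≤ γ) (hc : 0 ≤ c) (hc' : 0 ≤ c') (hlmax : 1 ≤ lmax) (t : ℕ) :
    IsBlockColSED dist (c' * (c * N * H + 1) ^ t) γ ((1 - lmax⁻¹ • M) ^ t * J) := by
  induction t with
  | zero => simpa using hJ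
  | succ t ih =>
    have hstep : (1 - lmax⁻¹ • M) ^ (t + 1) * J
        = (1 - lmax⁻¹ • M) ^ t * J - lmax⁻¹ • (M * ((1 - lmax⁻¹ • M) ^ t * J)) := by
      rw [pow_succ', Matrix.mul_assoc, Matrix.sub_mul, Matrix.one_mul, Matrix.smul_mul]
    rw [hstep]
    refine (ih.sub_smul (hM.mul ih hdist hγ hc (by positivity)) lmax⁻¹).mono ?_
    have hinv : |lmax⁻¹| ≤ 1 := by
      rw [abs_of_pos (inv_pos.2 (one_pos.trans_le hlmax))]
      exact inv_le_one_of_one_le₀ hlmax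
    calc c' * (c * N * H + 1) ^ t + |lmax⁻¹| * (H * N * (c * (c' * (c * N * H + 1) ^ t)))
        ≤ c' * (c * N * H + 1) ^ t + 1 * (H * N * (c * (c' * (c * N * H + 1) ^ t))) := by
          gcongr
      _ = c' * (c * N * H + 1) ^ (t + 1) := by ring

end BlockSED

theorem exists_geom_sum_mul_exp_le_and_pow_le {β μ γ D : ℝ} (hβ : 2 ≤ β) (hμ0 : 0 < μ)
    (hμ1 : μ ≤ 1) (hγ : 0 ≤ γ) (hD : 0 ≤ D) :
    ∃ T : ℕ,
      (∑ t ∈ Finset.range T, β ^ t) * Real.exp (-γ * D)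
          ≤ 2 * Real.exp (-(μ * γ / (Real.log β + μ)) * D) ∧
        (1 - μ) ^ T ≤ Real.exp (-(μ * γ / (Real.log β + μ)) * D) := by
  set L := Real.log β
  have hL : 0 < L := Real.log_pos (by linarith)
  set x := γ * D / (L + μ) with hxdef
  have hx : 0 ≤ x := by positivity
  refine ⟨⌈x⌉₊, ?_, ?_⟩
  · have hpow : β ^ ⌈x⌉₊ ≤ β * Real.exp (x * L) :=
      calc β ^ ⌈x⌉₊ = β ^ (⌈x⌉₊ : ℝ) := (Real.rpow_natCast β _).symm
        _ ≤ β ^ (x + 1) :=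
            Real.rpow_le_rpow_of_exponent_le (by linarith) (Nat.ceil_lt_add_one hx).le
        _ = β * Real.exp (x * L) := by
            rw [Real.rpow_add (by linarith), Real.rpow_one, Real.rpow_def_of_pos (by linarith),
              mul_comm, mul_comm (Real.log β)]
    have hsum : ∑ t ∈ Finset.range ⌈x⌉₊, β ^ t ≤ 2 * Real.exp (x * L) := by
      rw [geom_sum_eq (by linarith), div_le_iff₀ (by linarith)]
      nlinarith [Real.exp_pos (x * L)]
    have hexp : Real.exp (x * L) * Real.exp (-γ * D) = Real.exp (-(μ * γ / (L + μ)) * D) := by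
      rw [← Real.exp_add]
      congr 1
      rw [hxdef]
      field_simp
      ring
    calc (∑ t ∈ Finset.range ⌈x⌉₊, β ^ t) * Real.exp (-γ * D)
        ≤ 2 * Real.exp (x * L) * Real.exp (-γ * D) := by gcongr
      _ = 2 * Real.exp (-(μ * γ / (L + μ)) * D) := by rw [mul_assoc, hexp]
  · calc (1 - μ) ^ ⌈x⌉₊ ≤ Real.exp (-μ) ^ ⌈x⌉₊ :=
          pow_le_pow_left₀ (by linarith) (by linarith [Real.add_one_le_exp (-μ)]) _
      _ = Real.exp (-μ * ⌈x⌉₊) := by rw [← Real.exp_nat_mul, mul_comm]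
      _ ≤ Real.exp (-μ * x) :=
          Real.exp_le_exp.2 (mul_le_mul_of_nonpos_left (Nat.le_ceil x) (by linarith))
      _ = Real.exp (-(μ * γ / (L + μ)) * D) := by
          congr 1
          rw [hxdef]
          field_simp

section NeumannSED

variable {N H : ℕ} {d e : Fin N → ℕ} {dist : Fin N → Fin N → ℝ}
  {M : Matrix (Fin H × BIdx d) (Fin H × BIdx d) ℝ} {J : Matrix (Fin H × BIdx d) (BIdx e) ℝ}
  {cM cJ γ lmin lmax : ℝ}

theorem IsBlockSED.norm_colBlk_neg_inv_mul_le (hM : IsBlockSED dist cM γ M)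
    (hJ : IsBlockColSED dist cJ γ J) (hdist : IsDist dist) (hγ : 0 ≤ γ) (hcM : 0 ≤ cM)
    (hcJ : 0 ≤ cJ) (hlow : (M - lmin • 1).PosSemidef) (hup : (lmax • 1 - M).PosSemidef)
    (hlmin : 0 < lmin) (hle : lmin ≤ lmax) (hlmax : 1 ≤ lmax) (T : ℕ) (k : Fin H) (i j : Fin N) :
    ‖colBlk k i j (-M⁻¹ * J)‖
      ≤ cJ * ((∑ t ∈ Finset.range T, (cM * N * H + 1) ^ t) * Real.exp (-γ * dist i j))
        + (1 - lmin / lmax) ^ T * (‖J‖ / lmin) := by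
  have hlmax0 : 0 < lmax := one_pos.trans_le hlmax
  have hμ : 0 ≤ 1 - lmin / lmax := sub_nonneg.2 ((div_le_one hlmax0).2 hle)
  set A := 1 - lmax⁻¹ • M
  have hinv : M * M⁻¹ = 1 :=
    mul_nonsing_inv M (posDef_of_sub_smul_one_posSemidef hlow hlmin).det_pos.ne'.isUnit
  have hsplit : -M⁻¹ * J = -(lmax⁻¹ • ∑ t ∈ Finset.range T, A ^ t * J) - A ^ T * (M⁻¹ * J) := by
    conv_lhs => rw [eq_smul_geom_sum_add_pow_mul hinv lmax⁻¹ T]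
    rw [Matrix.neg_mul, Matrix.add_mul, Matrix.smul_mul, Matrix.sum_mul, Matrix.mul_assoc]
    abel
  have hhead : IsBlockColSED dist (∑ t ∈ Finset.range T, cJ * (cM * N * H + 1) ^ t) γ
      (∑ t ∈ Finset.range T, A ^ t * J) :=
    IsBlockColSED.sum fun t _ => hM.pow_mul hJ hdist hγ hcM hcJ hlmax t
  have htail : ‖A ^ T * (M⁻¹ * J)‖ ≤ (1 - lmin / lmax) ^ T * (‖J‖ / lmin) :=
    calc ‖A ^ T * (M⁻¹ * J)‖ ≤ ‖A‖ ^ T * (‖M⁻¹‖ * ‖J‖) :=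
          (l2_opNorm_mul _ _).trans (mul_le_mul (l2_opNorm_pow_le _ _) (l2_opNorm_mul _ _)
            (norm_nonneg _) (by positivity))
      _ ≤ (1 - lmin / lmax) ^ T * (lmin⁻¹ * ‖J‖) := by
          gcongr
          · exact norm_one_sub_inv_smul_le hlow hup hlmax0 hle
          · exact l2_opNorm_inv_le hlow hup hlmin hle
      _ = (1 - lmin / lmax) ^ T * (‖J‖ / lmin) := by rw [inv_mul_eq_div]
  calc ‖colBlk k i j (-M⁻¹ * J)‖
      ≤ lmax⁻¹ * ‖colBlk k i j (∑ t ∈ Finset.range T, A ^ t * J)‖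
        + ‖colBlk k i j (A ^ T * (M⁻¹ * J))‖ := by
        rw [hsplit, map_sub, map_neg, map_smul]
        refine (norm_sub_le _ _).trans ?_
        rw [norm_neg, norm_smul, Real.norm_of_nonneg (inv_nonneg.2 hlmax0.le)]
    _ ≤ 1 * ((∑ t ∈ Finset.range T, cJ * (cM * N * H + 1) ^ t) * Real.exp (-γ * dist i j))
        + (1 - lmin / lmax) ^ T * (‖J‖ / lmin) := by
        gcongr
        · exact inv_le_one_of_one_le₀ hlmax
        · exact hhead k i j
        · exact (norm_colBlk_le k i j _).trans htail
    _ = cJ * ((∑ t ∈ Finset.range T, (cM * N * H + 1) ^ t) * Real.exp (-γ * dist i j))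
        + (1 - lmin / lmax) ^ T * (‖J‖ / lmin) := by
        rw [← Finset.mul_sum]
        ring

end NeumannSED

theorem neumann_SED_general
    {N : ℕ} {nxd nud : Fin N → ℕ}
    (dist : Fin N → Fin N → ℝ) (hdist : IsDist dist)
    (H : ℕ)
    (M : Matrix (Fin H × BIdx nud) (Fin H × BIdx nud) ℝ)
    (J : Matrix (Fin H × BIdx nud) (BIdx nxd) ℝ)
    (cM cJ γM : ℝ) (hcM : 1 ≤ cM) (hcJ : 1 ≤ cJ) (hγM : 0 < γM)
    (hMsed : ∀ k m : Fin H, IsSED dist cM γM (Matrix.of fun a b => M (k, a) (m, b)))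
    (hJsed : ∀ k : Fin H, IsSED dist cJ γM (Matrix.of fun a b => J (k, a) b))
    (lmin lmax : ℝ) (hlmin : 0 < lmin) (hle : lmin ≤ lmax) (hlmax : 1 ≤ lmax)
    (hlow : (M - lmin • (1 : Matrix (Fin H × BIdx nud) (Fin H × BIdx nud) ℝ)).PosSemidef)
    (hup : (lmax • (1 : Matrix (Fin H × BIdx nud) (Fin H × BIdx nud) ℝ) - M).PosSemidef) :
    ∀ k : Fin H,
      IsSED dist (‖J‖ / lmin + 2 * cJ)
        (lmin * γM / (lmax * Real.log (cM * (N : ℝ) * (H : ℝ) + 1) + lmin))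
        (Matrix.of fun a b => (-M⁻¹ * J) (k, a) b) := by
  intro k i j
  have hlmax0 : 0 < lmax := one_pos.trans_le hlmax
  have hβ : 2 ≤ cM * N * H + 1 := by
    have hN : (1 : ℝ) ≤ N := by exact_mod_cast i.pos
    have hH : (1 : ℝ) ≤ H := by exact_mod_cast k.pos
    linarith [one_le_mul_of_one_le_of_one_le (one_le_mul_of_one_le_of_one_le hcM hN) hH]
  obtain ⟨T, hhead, htail⟩ := exists_geom_sum_mul_exp_le_and_pow_le hβ (div_pos hlmin hlmax0)
    ((div_le_one hlmax0).2 hle) hγM.le (hdist.nonneg i j)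
  have hγL : lmin / lmax * γM / (Real.log (cM * N * H + 1) + lmin / lmax)
      = lmin * γM / (lmax * Real.log (cM * N * H + 1) + lmin) := by
    field_simp
  rw [hγL] at hhead htail
  set γL := lmin * γM / (lmax * Real.log (cM * N * H + 1) + lmin)
  calc _ ≤ _ := IsBlockSED.norm_colBlk_neg_inv_mul_le hMsed hJsed hdist hγM.le (by linarith)
          (by linarith) hlow hup hlmin hle hlmax T k i j
    _ ≤ cJ * (2 * Real.exp (-γL * dist i j)) + Real.exp (-γL * dist i j) * (‖J‖ / lmin) := by
        gcongr
    _ = (‖J‖ / lmin + 2 * cJ) * Real.exp (-γL * dist i j) := by ring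

/-- Lemma: SED structure of `L = -M⁻¹J` for well-conditioned SED block data. -/
theorem neumann_SED
    {N : ℕ} (hN : 1 ≤ N) {nxd nud : Fin N → ℕ}
    (hnx : ∀ i, 1 ≤ nxd i) (hnu : ∀ i, 1 ≤ nud i)
    (dist : Fin N → Fin N → ℝ) (hdist : IsDist dist)
    (H : ℕ) (hH : 1 ≤ H)
    (M : Matrix (Fin H × BIdx nud) (Fin H × BIdx nud) ℝ)
    (J : Matrix (Fin H × BIdx nud) (BIdx nxd) ℝ)
    (cM cJ γM : ℝ) (hcM : 1 ≤ cM) (hcJ : 1 ≤ cJ) (hγM : 0 < γM)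
    (hMsed : ∀ k m : Fin H, IsSED dist cM γM (Matrix.of fun a b => M (k, a) (m, b)))
    (hJsed : ∀ k : Fin H, IsSED dist cJ γM (Matrix.of fun a b => J (k, a) b))
    (lmin lmax : ℝ) (hlmin : 0 < lmin) (hle : lmin ≤ lmax) (hlmax : 1 ≤ lmax)
    (hlow : (M - lmin • (1 : Matrix (Fin H × BIdx nud) (Fin H × BIdx nud) ℝ)).PosSemidef)
    (hup : (lmax • (1 : Matrix (Fin H × BIdx nud) (Fin H × BIdx nud) ℝ) - M).PosSemidef) :
    ∀ k : Fin H,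
      IsSED dist (‖J‖ / lmin + 2 * cJ)
        (lmin * γM / (lmax * Real.log (cM * (N : ℝ) * (H : ℝ) + 1) + lmin))
        (Matrix.of fun a b => (-M⁻¹ * J) (k, a) b) :=
  neumann_SED_general dist hdist H M J cM cJ γM hcM hcJ hγM hMsed hJsed lmin lmax hlmin hle hlmax
    hlow hup
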